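/- Let γ, γ′ be quasi-geodesic rays starting at o in an HHS 𝒳, and let κ be a sublinear function. If γ and γ′ κ-fellow travel each other, then γ has κ-bounded projections if and only if γ′ has κ-bounded projections. -/
import Mathlib


open Metric Set Filter

/-- A sublinear function: `κ : [0,∞) → [1,∞)` concave, monotone increasing,
with `κ(t)/t → 0`. -/
def Sublinear (κ : ℝ → ℝ) : Prop :=
  (∀ t : ℝ, 1 ≤ κ t) ∧ Monotone κ ∧ ConcaveOn ℝ (Set.Ici 0) κ ∧
    Filter.Tendsto (fun t => κ t / t) Filter.atTop (nhds 0)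


/-- A `(q,Q)`-quasi-geodesic ray. -/
def QGRay {X : Type*} [MetricSpace X] (q Q : ℝ) (α : ℝ → X) : Prop :=
  ∀ s t : ℝ, 0 ≤ s → 0 ≤ t →
    (1 / q) * |s - t| - Q ≤ dist (α s) (α t) ∧ dist (α s) (α t) ≤ q * |s - t| + Q

/-- Two rays `κ`-fellow travel: each lies in some `(κ,n)`-neighborhood of the other. -/
def KappaFT {X : Type*} [MetricSpace X] (o : X) (κ : ℝ → ℝ) (α β : ℝ → X) : Prop :=
  ∃ n : ℝ,
    (∀ t : ℝ, 0 ≤ t → Metric.infDist (α t) (β '' Set.Ici 0) ≤ n * κ (dist o (α t))) ∧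
    (∀ t : ℝ, 0 ≤ t → Metric.infDist (β t) (α '' Set.Ici 0) ≤ n * κ (dist o (β t)))

/-- A lightweight model of a hierarchically hyperbolic space `(𝒳, 𝔖)`: an index set of
domains with nesting and orthogonality, a `⊑`-maximal domain `S`, an HHS constant `E`,
for each domain `U` the induced projection pseudo-distance
`d U x y = d_{𝒞(U)}(π_U x, π_U y)` (coarsely Lipschitz, with `𝒞(U)` `E`-hyperbolic via
the four-point condition), a coarse median, and a complexity bound. -/
structure HHSLite (X : Type*) [MetricSpace X] where
  Dom : Type
  S : Dom
  nest : Dom → Dom → Prop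
  orth : Dom → Dom → Prop
  nest_S : ∀ U : Dom, nest U S
  E : ℝ
  one_le_E : 1 ≤ E
  d : Dom → X → X → ℝ
  d_nonneg : ∀ U x y, 0 ≤ d U x y
  d_self : ∀ U x, d U x x = 0
  d_symm : ∀ U x y, d U x y = d U y x
  d_triangle : ∀ U x y z, d U x z ≤ d U x y + d U y z + E
  d_lip : ∀ U x y, d U x y ≤ E * dist x y + E
  hyp4 : ∀ U x y z w,
    d U x y + d U z w ≤ max (d U x z + d U y w) (d U x w + d U y z) + E
  m : X → X → X → X
  m_lip : ∀ x y z x' y' z' : X,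
    dist (m x y z) (m x' y' z') ≤ E * (dist x x' + dist y y' + dist z z') + E
  complexity : ℕ
  complexity_bound : ∀ T : Finset Dom,
    (∀ U ∈ T, ∀ V ∈ T, U = V ∨ nest U V ∨ nest V U ∨ orth U V) →
    T.card ≤ complexity


/-- A ray `γ` has `κ`-bounded projections: `d_U(o, γ(t)) ≤ C·κ(t)` for all `t ≥ 0` and
all proper domains `U ⊊ S`. -/
def KBP {X : Type*} [MetricSpace X] (H : HHSLite X) (κ : ℝ → ℝ) (γ : ℝ → X) : Prop :=
  ∃ C : ℝ, 0 < C ∧ ∀ t : ℝ, 0 ≤ t → ∀ U : H.Dom, U ≠ H.S →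
    H.d U (γ 0) (γ t) ≤ C * κ t

lemma kappa_scale {κ : ℝ → ℝ} (hκ : Sublinear κ) {l t : ℝ} (hl : 1 ≤ l) (ht : 0 ≤ t) :
    κ (l * t) ≤ l * κ t := by
  obtain ⟨h1, hmono, hconc, -⟩ := hκ
  have hl0 : 0 < l := lt_of_lt_of_le one_pos hl
  have hx : l * t ∈ Set.Ici (0:ℝ) := mul_nonneg hl0.le ht
  have hy : (0:ℝ) ∈ Set.Ici (0:ℝ) := Set.mem_Ici.mpr le_rfl
  have ha : (0:ℝ) ≤ 1/l := by positivity
  have hb : (0:ℝ) ≤ 1 - 1/l := by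
    have : 1/l ≤ 1 := by rw [div_le_one hl0]; exact hl
    linarith
  have hab : 1/l + (1 - 1/l) = 1 := by ring
  have h := hconc.2 hx hy ha hb hab
  simp only [smul_eq_mul, mul_zero, add_zero] at h
  have harg : (1/l) * (l*t) = t := by field_simp
  rw [harg] at h
  have hκ0 : (0:ℝ) ≤ κ 0 := le_trans zero_le_one (h1 0)
  have key : (1/l) * κ (l*t) ≤ κ t := by nlinarith
  calc κ (l*t) = l * ((1/l) * κ (l*t)) := by field_simp
    _ ≤ l * κ t := mul_le_mul_of_nonneg_left key hl0.le

lemma kappa_two_mul {κ : ℝ → ℝ} (hκ : Sublinear κ) {s t : ℝ} (hs : 0 ≤ s) (ht : 0 ≤ t) :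
    κ (s + t) ≤ 2 * κ s * κ t := by
  have h1 := hκ.1
  have hmono := hκ.2.1
  have h2 : s + t ≤ 2 * max s t := by
    rcases le_total s t with h | h <;> simp [max_eq_right, max_eq_left, h] <;> linarith
  have hm : 0 ≤ max s t := le_trans hs (le_max_left _ _)
  have h3 : κ (s + t) ≤ 2 * κ (max s t) :=
    le_trans (hmono h2) (kappa_scale hκ one_le_two hm)
  have h4 : κ (max s t) ≤ κ s * κ t := by
    rcases le_total s t with h | h
    · rw [max_eq_right h]
      nlinarith [h1 s, h1 t]
    · rw [max_eq_left h]
      nlinarith [h1 s, h1 t]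
  nlinarith [h1 s, h1 t]

lemma kappa_lin {κ : ℝ → ℝ} (hκ : Sublinear κ) {t : ℝ} (ht : 0 ≤ t) :
    κ t ≤ κ 1 * (t + 1) := by
  have h1 := hκ.1
  have hmono := hκ.2.1
  rcases le_total t 1 with h | h
  · have := hmono h
    nlinarith [h1 1]
  · have : κ t = κ (t * 1) := by rw [mul_one]
    rw [this]
    have := kappa_scale hκ h zero_le_one
    nlinarith [h1 1]


set_option maxHeartbeats 1600000 in
lemma kbp_transfer {X : Type*} [MetricSpace X] (H : HHSLite X)
    (κ : ℝ → ℝ) (hκ : Sublinear κ) (o : X)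
    (q Q q' Q' : ℝ) (hq : 0 < q) (hQ : 0 ≤ Q) (hq' : 0 < q') (hQ' : 0 ≤ Q')
    (γ γ' : ℝ → X) (hγ : QGRay q Q γ) (hγ' : QGRay q' Q' γ')
    (h0 : γ 0 = o) (h0' : γ' 0 = o)
    (n : ℝ)
    (hn : ∀ t : ℝ, 0 ≤ t → Metric.infDist (γ' t) (γ '' Set.Ici 0) ≤ n * κ (dist o (γ' t)))
    (hK : KBP H κ γ) : KBP H κ γ' := by
  have h1 := hκ.1
  have hmono := hκ.2.1
  have hE := H.one_le_E
  -- n is nonnegative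
  have hn0 : 0 ≤ n := by
    have h := hn 0 le_rfl
    rw [h0'] at h
    simp only [dist_self] at h
    have := Metric.infDist_nonneg (x := o) (s := γ '' Set.Ici 0)
    nlinarith [h1 0]
  obtain ⟨C, hC, hCb⟩ := hK
  set K1 := κ 1 with hK1
  have hK11 : 1 ≤ K1 := h1 1
  set M1 := 2 * κ Q' * max q' 1 with hM1
  have hM1pos : 1 ≤ M1 := by
    have hh1 : (1:ℝ) ≤ max q' 1 := le_max_right _ _
    nlinarith [h1 Q']
  set P := q*q' + q*(Q+Q'+1) + q*n*M1*K1 with hP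
  have hPnn : 0 ≤ P := by
    have h2 := mul_nonneg (mul_nonneg (mul_nonneg hq.le hn0)
      (show (0:ℝ) ≤ M1 by linarith)) (show (0:ℝ) ≤ K1 by linarith)
    nlinarith
  have hmax1 : (1:ℝ) ≤ max P 1 := le_max_right _ _
  have hC' : 0 < C*(2*(max P 1)*K1) + H.E*(n*M1) + 3*H.E := by
    have e3 : 0 ≤ n*M1 := mul_nonneg hn0 (by linarith)
    nlinarith [mul_pos hC (show (0:ℝ) < 2*(max P 1)*K1 by nlinarith),
      mul_nonneg (show (0:ℝ) ≤ H.E by linarith) e3]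
  refine ⟨C*(2*(max P 1)*K1) + H.E*(n*M1) + 3*H.E, hC', ?_⟩
  intro t ht U hU
  have hκt : 1 ≤ κ t := h1 t
  -- distance from o to γ' t
  have hdγ't : dist o (γ' t) ≤ q' * t + Q' := by
    have h := (hγ' 0 t le_rfl ht).2
    rw [h0'] at h
    rwa [zero_sub, abs_neg, abs_of_nonneg ht] at h
  -- κ of that distance
  have hκQ' : (0:ℝ) ≤ κ Q' := le_trans zero_le_one (h1 Q')
  have hBk : κ (dist o (γ' t)) ≤ M1 * κ t := by
    have hb1 : κ (dist o (γ' t)) ≤ κ (q' * t + Q') := hmono hdγ't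
    have hb2 : κ (q' * t + Q') ≤ 2 * κ (q' * t) * κ Q' :=
      kappa_two_mul hκ (by positivity) hQ'
    have hb3 : κ (q' * t) ≤ max q' 1 * κ t := by
      have h4 : q' * t ≤ max q' 1 * t :=
        mul_le_mul_of_nonneg_right (le_max_left _ _) ht
      exact le_trans (hmono h4) (kappa_scale hκ (le_max_right _ _) ht)
    nlinarith [mul_le_mul_of_nonneg_right hb3 hκQ']
  -- find a close point on γ
  have hne : (γ '' Set.Ici 0).Nonempty :=
    ⟨γ 0, Set.mem_image_of_mem _ (Set.mem_Ici.mpr le_rfl)⟩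
  have hB : Metric.infDist (γ' t) (γ '' Set.Ici 0) < n * M1 * κ t + 1 := by
    have h5 := hn t ht
    have h2 : n * κ (dist o (γ' t)) ≤ n * (M1 * κ t) :=
      mul_le_mul_of_nonneg_left hBk hn0
    nlinarith
  obtain ⟨y, ⟨s, hs, rfl⟩, hdy⟩ := (Metric.infDist_lt_iff hne).mp hB
  rw [Set.mem_Ici] at hs
  have hds : dist (γ s) (γ' t) < n * M1 * κ t + 1 := by rwa [dist_comm]
  -- bound on s
  have hsb : s ≤ P * (t + 1) := by
    have hl := (hγ s 0 hs le_rfl).1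
    rw [h0, sub_zero, abs_of_nonneg hs] at hl
    have hd2 : dist (γ s) o ≤ dist (γ s) (γ' t) + dist (γ' t) o := dist_triangle _ _ _
    have hd3 : dist (γ' t) o ≤ q' * t + Q' := by rwa [dist_comm]
    have hκtl : κ t ≤ K1 * (t + 1) := kappa_lin hκ ht
    have hq1 : (1/q) * s ≤ n * M1 * κ t + 1 + (q' * t + Q') + Q := by linarith
    have hnm : 0 ≤ n * M1 := mul_nonneg hn0 (by linarith)
    have hBl : n * M1 * κ t ≤ n * M1 * (K1 * (t+1)) := mul_le_mul_of_nonneg_left hκtl hnm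
    have hs2 : s ≤ q * (n * M1 * κ t + 1 + (q' * t + Q') + Q) := by
      have h6 := mul_le_mul_of_nonneg_left hq1 hq.le
      calc s = q * ((1/q) * s) := by field_simp
        _ ≤ _ := h6
    nlinarith [mul_le_mul_of_nonneg_left hBl hq.le,
      mul_nonneg hq.le hq'.le,
      mul_nonneg (mul_nonneg hq.le (show (0:ℝ) ≤ Q+Q'+1 by linarith)) ht]
  -- κ s bound
  have hκs : κ s ≤ 2 * (max P 1) * K1 * κ t := by
    have c1 : κ s ≤ κ (max P 1 * (t+1)) := by
      apply hmono
      calc s ≤ P * (t+1) := hsb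
        _ ≤ max P 1 * (t+1) := mul_le_mul_of_nonneg_right (le_max_left _ _) (by linarith)
    have c2 : κ (max P 1 * (t+1)) ≤ max P 1 * κ (t+1) :=
      kappa_scale hκ (le_max_right _ _) (by linarith)
    have c3 : κ (t+1) ≤ 2 * κ t * K1 := kappa_two_mul hκ ht zero_le_one
    nlinarith [mul_le_mul_of_nonneg_left c3 (show (0:ℝ) ≤ max P 1 by linarith)]
  -- final assembly
  have tri := H.d_triangle U (γ' 0) (γ s) (γ' t)
  have lip := H.d_lip U (γ s) (γ' t)
  have hdeq : H.d U (γ' 0) (γ s) = H.d U (γ 0) (γ s) := by rw [h0, h0']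
  rw [hdeq] at tri
  have hCs := hCb s hs U hU
  have hEd : H.E * dist (γ s) (γ' t) ≤ H.E * (n * M1 * κ t + 1) :=
    mul_le_mul_of_nonneg_left hds.le (by linarith)
  have hCκ : C * κ s ≤ C * (2 * (max P 1) * K1 * κ t) :=
    mul_le_mul_of_nonneg_left hκs hC.le
  have h3E : 3 * H.E ≤ 3 * H.E * κ t := by nlinarith
  nlinarith

/-- Having `κ`-bounded projections is invariant under `κ`-fellow traveling. -/
theorem kappa_bounded_projections_fellow_travel_invariant
    {X : Type*} [MetricSpace X] (H : HHSLite X)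
    (κ : ℝ → ℝ) (hκ : Sublinear κ) (o : X)
    (q Q q' Q' : ℝ) (hq : 0 < q) (hQ : 0 ≤ Q) (hq' : 0 < q') (hQ' : 0 ≤ Q')
    (γ γ' : ℝ → X) (hγ : QGRay q Q γ) (hγ' : QGRay q' Q' γ')
    (h0 : γ 0 = o) (h0' : γ' 0 = o)
    (hft : KappaFT o κ γ γ') :
    KBP H κ γ ↔ KBP H κ γ' := by
  obtain ⟨n, hn1, hn2⟩ := hft
  constructor
  · intro h
    exact kbp_transfer H κ hκ o q Q q' Q' hq hQ hq' hQ' γ γ' hγ hγ' h0 h0' n hn2 h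
  · intro h
    exact kbp_transfer H κ hκ o q' Q' q Q hq' hQ' hq hQ γ' γ hγ' hγ h0' h0 n hn1 h
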